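/- For p ∈ (0,1) let g_p(q) = log(p^q + (1-p)^q). Then for all q ∈ ℝ, g_p''(q) = p^q (1-p)^q (log(p/(1-p)))^2 / (p^q + (1-p)^q)^2. Moreover, for every q_0 > 0, sup{ g_p''(q) : p ∈ (0,1), q ≥ q_0 } < ∞; indeed for p ∈ (0,1/2] and q ≥ q_0 one has g_p''(q) ≤ (4p(1-p))^{q_0} (log p)^2. -/

import Mathlib

/-!
With `t = a / b ≤ 1`, the second derivative of `q ↦ log (a ^ q + b ^ q)` is
`t ^ q (log t)² / (1 + t ^ q)² ≤ t ^ q (log t)²`, which decreases in `q`, and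
`t ^ q₀ (log t)² ≤ 4 / q₀²` because `|t ^ (q₀/2) log t| < 2 / q₀` on `(0, 1]`.
For `p ≤ 1/2` and `t = p / (1 - p)` one has moreover `t ≤ 4p(1-p)` and `|log t| ≤ |log p|`.
-/

open MeasureTheory Filter Set

noncomputable section

/-- `g_p(q) = log(p^q + (1-p)^q)` (natural logarithm, real powers). -/
def gfun (p : ℝ) : ℝ → ℝ := fun q => Real.log (p ^ q + (1 - p) ^ q)

open Real

lemma hasDerivAt_rpow_add_rpow {a b : ℝ} (ha : 0 < a) (hb : 0 < b) (q : ℝ) :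
    HasDerivAt (fun q : ℝ => a ^ q + b ^ q) (a ^ q * log a + b ^ q * log b) q :=
  (hasStrictDerivAt_const_rpow ha q).hasDerivAt.add (hasStrictDerivAt_const_rpow hb q).hasDerivAt

lemma deriv_log_rpow_add_rpow {a b : ℝ} (ha : 0 < a) (hb : 0 < b) :
    deriv (fun q : ℝ => log (a ^ q + b ^ q)) =
      fun q : ℝ => (a ^ q * log a + b ^ q * log b) / (a ^ q + b ^ q) := by
  funext q
  exact ((hasDerivAt_rpow_add_rpow ha hb q).log (by positivity)).deriv

lemma iteratedDeriv_two_log_rpow_add_rpow {a b : ℝ} (ha : 0 < a) (hb : 0 < b) (q : ℝ) :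
    iteratedDeriv 2 (fun q : ℝ => log (a ^ q + b ^ q)) q =
      a ^ q * b ^ q * log (a / b) ^ 2 / (a ^ q + b ^ q) ^ 2 := by
  have hnum : HasDerivAt (fun q : ℝ => a ^ q * log a + b ^ q * log b)
      (a ^ q * log a * log a + b ^ q * log b * log b) q :=
    ((hasStrictDerivAt_const_rpow ha q).hasDerivAt.mul_const (log a)).add
      ((hasStrictDerivAt_const_rpow hb q).hasDerivAt.mul_const (log b))
  have hden : a ^ q + b ^ q ≠ 0 := by positivity
  rw [iteratedDeriv_succ, iteratedDeriv_one, deriv_log_rpow_add_rpow ha hb,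
    (hnum.fun_div (hasDerivAt_rpow_add_rpow ha hb q) hden).deriv, log_div ha.ne' hb.ne']
  field_simp
  ring

lemma sq_log_div_comm (a b : ℝ) : log (a / b) ^ 2 = log (b / a) ^ 2 := by
  rw [← inv_div, log_inv, neg_sq]

lemma rpow_mul_sq_log_le {t c : ℝ} (ht : 0 < t) (ht1 : t ≤ 1) (hc : 0 < c) :
    t ^ c * log t ^ 2 ≤ 4 / c ^ 2 := by
  have h := abs_log_mul_self_rpow_lt t (c / 2) ht ht1 (by positivity)
  have hsq : t ^ c * log t ^ 2 = |log t * t ^ (c / 2)| ^ 2 := by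
    rw [sq_abs, mul_pow, ← rpow_natCast (t ^ (c / 2)), ← rpow_mul ht.le]
    norm_num [mul_div_cancel₀ c two_ne_zero, mul_comm]
  calc t ^ c * log t ^ 2 = |log t * t ^ (c / 2)| ^ 2 := hsq
    _ ≤ (1 / (c / 2)) ^ 2 := pow_le_pow_left₀ (abs_nonneg _) h.le 2
    _ = 4 / c ^ 2 := by field_simp; norm_num

lemma rpow_mul_rpow_mul_sq_log_div_le {a b q₀ q : ℝ} (ha : 0 < a) (hab : a ≤ b) (hq : q₀ ≤ q) :
    a ^ q * b ^ q * log (a / b) ^ 2 / (a ^ q + b ^ q) ^ 2 ≤ (a / b) ^ q₀ * log (a / b) ^ 2 := by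
  have hb : 0 < b := ha.trans_le hab
  calc a ^ q * b ^ q * log (a / b) ^ 2 / (a ^ q + b ^ q) ^ 2
      ≤ a ^ q * b ^ q * log (a / b) ^ 2 / (b ^ q) ^ 2 := by
        gcongr
        exact le_add_of_nonneg_left (by positivity)
    _ = (a / b) ^ q * log (a / b) ^ 2 := by
        rw [div_rpow ha.le hb.le]
        field_simp
    _ ≤ (a / b) ^ q₀ * log (a / b) ^ 2 := by
        gcongr ?_ * _
        exact rpow_le_rpow_of_exponent_ge (by positivity) ((div_le_one hb).mpr hab) hq

lemma rpow_mul_rpow_mul_sq_log_div_le_four_div_sq {a b q₀ q : ℝ} (ha : 0 < a) (hb : 0 < b)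
    (hq₀ : 0 < q₀) (hq : q₀ ≤ q) :
    a ^ q * b ^ q * log (a / b) ^ 2 / (a ^ q + b ^ q) ^ 2 ≤ 4 / q₀ ^ 2 := by
  wlog hab : a ≤ b generalizing a b
  · rw [mul_comm (a ^ q), add_comm (a ^ q), sq_log_div_comm]
    exact this hb ha (le_of_not_ge hab)
  calc a ^ q * b ^ q * log (a / b) ^ 2 / (a ^ q + b ^ q) ^ 2
      ≤ (a / b) ^ q₀ * log (a / b) ^ 2 := rpow_mul_rpow_mul_sq_log_div_le ha hab hq
    _ ≤ 4 / q₀ ^ 2 := rpow_mul_sq_log_le (by positivity) ((div_le_one hb).mpr hab) hq₀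

lemma div_one_sub_le_four_mul_mul_one_sub {p : ℝ} (hp : 0 ≤ p) (hp2 : p ≤ 1 / 2) :
    p / (1 - p) ≤ 4 * p * (1 - p) := by
  rw [div_le_iff₀ (by linarith : (0 : ℝ) < 1 - p)]
  nlinarith [mul_nonneg hp (by nlinarith : (0 : ℝ) ≤ 4 * (1 - p) ^ 2 - 1)]

lemma sq_log_div_one_sub_le_sq_log {p : ℝ} (hp : 0 < p) (hp2 : p ≤ 1 / 2) :
    log (p / (1 - p)) ^ 2 ≤ log p ^ 2 := by
  have hp1 : 0 < 1 - p := by linarith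
  have hlog_one_sub : log (1 - p) ≤ 0 := log_nonpos (by linarith) (by linarith)
  have hlog_div : log (p / (1 - p)) ≤ 0 :=
    log_nonpos (by positivity) ((div_le_one (by linarith)).mpr (by linarith))
  rw [← neg_sq (log p)]
  refine sq_le_sq' ?_ (by linarith [log_nonpos hp.le (by linarith : p ≤ 1)])
  rw [neg_neg, log_div hp.ne' (by linarith)]
  linarith

/-- computations in the proof of Lemma 2.1. For `p ∈ (0,1)` and all
`q`, `g_p''(q) = p^q (1-p)^q (log(p/(1-p)))² / (p^q + (1-p)^q)²`. Moreover, for every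
`q₀ > 0` the quantities `g_p''(q)`, `p ∈ (0,1)`, `q ≥ q₀`, are bounded above; indeed for
`p ∈ (0,1/2]` and `q ≥ q₀` one has `g_p''(q) ≤ (4p(1-p))^{q₀} (log p)²`. -/
theorem statement6 :
    (∀ p ∈ Set.Ioo (0 : ℝ) 1, ∀ q : ℝ,
        iteratedDeriv 2 (gfun p) q
          = p ^ q * (1 - p) ^ q * Real.log (p / (1 - p)) ^ 2
              / (p ^ q + (1 - p) ^ q) ^ 2)
      ∧ (∀ q₀ : ℝ, 0 < q₀ →
          ∃ M : ℝ, ∀ p ∈ Set.Ioo (0 : ℝ) 1, ∀ q : ℝ, q₀ ≤ q →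
            iteratedDeriv 2 (gfun p) q ≤ M)
      ∧ ∀ q₀ : ℝ, 0 < q₀ → ∀ p : ℝ, 0 < p → p ≤ 1 / 2 → ∀ q : ℝ, q₀ ≤ q →
          iteratedDeriv 2 (gfun p) q ≤ (4 * p * (1 - p)) ^ q₀ * Real.log p ^ 2 := by
  have hformula : ∀ p ∈ Set.Ioo (0 : ℝ) 1, ∀ q : ℝ, iteratedDeriv 2 (gfun p) q
      = p ^ q * (1 - p) ^ q * log (p / (1 - p)) ^ 2 / (p ^ q + (1 - p) ^ q) ^ 2 :=
    fun p hp q => iteratedDeriv_two_log_rpow_add_rpow hp.1 (sub_pos.mpr hp.2) q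
  refine ⟨hformula, fun q₀ hq₀ => ⟨4 / q₀ ^ 2, fun p hp q hq => ?_⟩,
    fun q₀ hq₀ p hp hp2 q hq => ?_⟩
  · rw [hformula p hp]
    exact rpow_mul_rpow_mul_sq_log_div_le_four_div_sq hp.1 (sub_pos.mpr hp.2) hq₀ hq
  · rw [hformula p ⟨hp, by linarith⟩]
    calc p ^ q * (1 - p) ^ q * log (p / (1 - p)) ^ 2 / (p ^ q + (1 - p) ^ q) ^ 2
        ≤ (p / (1 - p)) ^ q₀ * log (p / (1 - p)) ^ 2 :=
          rpow_mul_rpow_mul_sq_log_div_le hp (by linarith) hq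
      _ ≤ (4 * p * (1 - p)) ^ q₀ * log p ^ 2 := by
          have h1p : 0 < 1 - p := by linarith
          gcongr ?_ ^ q₀ * ?_
          · exact div_one_sub_le_four_mul_mul_one_sub hp.le hp2
          · exact sq_log_div_one_sub_le_sq_log hp hp2
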